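/- Let β ∈ (0,1) and let w be the facility location profile output by the (1,β)-Quantile mechanism on an instance. Then for every facility location profile o of that instance, AoM(w) ≤ max{1 + 2(1 − β)/β, 1 + 2/(1 − β)} · AoM(o). In particular, the distortion of the (1,β)-Quantile mechanism under the Average-of-Max cost is at most max{1 + 2(1 − β)/β, 1 + 2/(1 − β)}. -/

import Mathlib

noncomputable section

/-- Max-variant individual cost of an agent at `x` under facility profile `w`. -/
def fcost (x : ℝ) (w : ℝ × ℝ) : ℝ := max |x - w.1| |x - w.2|

/-- `w` is a facility location profile for the candidate multiset `A`:
its first slot is an element of `A` and its second slot is an element of `A`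
with one copy of the first slot removed. -/
def IsProfile (A : Multiset ℝ) (w : ℝ × ℝ) : Prop :=
  w.1 ∈ A ∧ w.2 ∈ A.erase w.1

/-- Canonical closest element of the multiset `A` to `p` (ties broken to the smaller). -/
def closest (A : Multiset ℝ) (p : ℝ) : ℝ :=
  if h : A.toFinset.Nonempty then
    (A.toFinset.filter fun a => ∀ b ∈ A.toFinset, |p - a| ≤ |p - b|).min'
      (by
        obtain ⟨a, ha, hmin⟩ := A.toFinset.exists_min_image (fun a => |p - a|) h
        exact ⟨a, Finset.mem_filter.mpr ⟨ha, hmin⟩⟩)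
  else 0

/-- The `⌈γ · |S|⌉`-th leftmost element of the multiset `S` (the leftmost when `γ = 0`). -/
def qSel (S : Multiset ℝ) (γ : ℝ) : ℝ :=
  (S.sort (· ≤ ·)).getD (⌈γ * (Multiset.card S : ℝ)⌉.toNat - 1) 0

/-- Multiset of locations of the agents of group `d`. -/
def groupLocs {n k : ℕ} (group : Fin n → Fin k) (x : Fin n → ℝ) (d : Fin k) : Multiset ℝ :=
  ((Finset.univ.filter fun i => group i = d).val).map x

/-- The (α,β)-Quantile mechanism: for each group `d` the representatives are the two
candidate locations closest to the ⌈α·n_d⌉-th leftmost agent of the group, and the two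
facilities are chosen among the representatives by the ⌈β·k⌉-th leftmost rule. -/
def quantileMech (A : Multiset ℝ) (α β : ℝ) {n k : ℕ}
    (group : Fin n → Fin k) (x : Fin n → ℝ) : ℝ × ℝ :=
  let y1 : Fin k → ℝ := fun d => closest A (qSel (groupLocs group x d) α)
  let y2 : Fin k → ℝ := fun d => closest (A.erase (y1 d)) (qSel (groupLocs group x d) α)
  let w1 : ℝ := qSel (Finset.univ.val.map y1) β
  let w2 : ℝ := qSel (Finset.univ.val.map fun d => if y1 d = w1 then y2 d else y1 d) β
  (w1, w2)

/-- Average-of-Max cost. -/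
def AoM {n k : ℕ} (group : Fin n → Fin k) (x : Fin n → ℝ) (w : ℝ × ℝ) : ℝ :=
  (1 / (k : ℝ)) * ∑ d : Fin k, ⨆ i : {i : Fin n // group i = d}, fcost (x i.1) w

/-!
Let `r_d` be the rightmost agent of group `d` and `c_d` its cost under `o`, at most the cost
`OPT_d` of the whole group. Both representatives of `d` lie within `c_d` of `r_d`: whichever
candidate slot the first one takes, an optimal facility is still available. As each facility is
a `β`-quantile of representatives, at least `βk` groups have a representative left of both
facilities and at least `(1 - β)k` groups one right of both. Let `ℓ` (`ρ`) be how far the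
facilities overshoot the optimal ones to the left (right). A group of the first kind pays for
`ℓ`, one of the second kind for `ρ`, and one of both kinds for `ℓ + ρ` out of `2 c_d`, so
`βk ℓ + (1 - β)k ρ ≤ 2 ∑ c_d`. Moving the facilities raises an agent's cost by at most
`max ℓ ρ`, and by at most `ρ` in a group of the first kind, whose agents all lie left of `r_d`.
So the total cost exceeds `∑ OPT_d` by at most `k max ℓ ρ - βk (max ℓ ρ - ρ)`, and maximising
this under the budget gives the constant.
-/

open Finset

theorem List.Pairwise.succ_le_countP_le_getElem {α : Type*} [LinearOrder α] {L : List α}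
    (hL : L.Pairwise (· ≤ ·)) {i : ℕ} (hi : i < L.length) :
    i + 1 ≤ L.countP (· ≤ L[i]) := by
  have htake : ∀ a ∈ L.take (i + 1), a ≤ L[i] := by
    intro a ha
    obtain ⟨j, hj, rfl⟩ := List.getElem_of_mem ha
    rw [List.getElem_take]
    simp only [List.length_take] at hj
    exact hL.rel_get_of_le (a := ⟨j, by omega⟩) (b := ⟨i, hi⟩) (by simp; omega)
  refine le_trans ?_ (List.take_sublist (i + 1) L).countP_le
  rw [List.countP_eq_length.mpr (by simpa using htake), List.length_take]
  omega

theorem List.Pairwise.length_sub_le_countP_getElem_le {α : Type*} [LinearOrder α] {L : List α}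
    (hL : L.Pairwise (· ≤ ·)) {i : ℕ} (hi : i < L.length) :
    L.length - i ≤ L.countP (L[i] ≤ ·) := by
  have hdrop : ∀ a ∈ L.drop i, L[i] ≤ a := by
    intro a ha
    obtain ⟨j, hj, rfl⟩ := List.getElem_of_mem ha
    rw [List.getElem_drop]
    simp only [List.length_drop] at hj
    exact hL.rel_get_of_le (a := ⟨i, hi⟩) (b := ⟨i + j, by omega⟩) (by simp)
  refine le_trans ?_ (List.drop_sublist i L).countP_le
  rw [List.countP_eq_length.mpr (by simpa using hdrop), List.length_drop]

theorem Int.ceil_toNat_sub_one_spec {R : Type*} [Field R] [LinearOrder R] [IsStrictOrderedRing R]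
    [FloorRing R] {t : R} (ht : 0 < t) :
    t ≤ ((⌈t⌉.toNat - 1 : ℕ) : R) + 1 ∧ ((⌈t⌉.toNat - 1 : ℕ) : R) < t := by
  rw [Int.ceil_toNat]
  have h1 : 1 ≤ ⌈t⌉₊ := Nat.one_le_iff_ne_zero.mpr (Nat.ceil_pos.mpr ht).ne'
  rw [Nat.cast_sub h1, Nat.cast_one, sub_add_cancel]
  exact ⟨Nat.le_ceil t, by linarith [Nat.ceil_lt_add_one ht.le]⟩

theorem Multiset.countP_sort {α : Type*} [LinearOrder α] (S : Multiset α) (p : α → Prop)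
    [DecidablePred p] : (S.sort (· ≤ ·)).countP p = S.countP p := by
  rw [← Multiset.coe_countP, Multiset.sort_eq]

section qSel

variable {S : Multiset ℝ} {γ : ℝ}

theorem exists_qSel_eq_getElem (hS : S ≠ 0) (hγ0 : 0 < γ) (hγ1 : γ ≤ 1) :
    ∃ i, ∃ hi : i < (S.sort (· ≤ ·)).length, qSel S γ = (S.sort (· ≤ ·))[i] ∧
      γ * Multiset.card S ≤ i + 1 ∧ (i : ℝ) < γ * Multiset.card S := by
  have hm : (0 : ℝ) < Multiset.card S := by exact_mod_cast Multiset.card_pos.mpr hS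
  obtain ⟨hle, hlt⟩ := Int.ceil_toNat_sub_one_spec (mul_pos hγ0 hm)
  have hi : ⌈γ * Multiset.card S⌉.toNat - 1 < (S.sort (· ≤ ·)).length := by
    rw [Multiset.length_sort]
    exact_mod_cast hlt.trans_le (mul_le_of_le_one_left hm.le hγ1)
  exact ⟨_, hi, List.getD_eq_getElem _ 0 hi, hle, hlt⟩

theorem qSel_mem (hS : S ≠ 0) (hγ0 : 0 < γ) (hγ1 : γ ≤ 1) : qSel S γ ∈ S := by
  obtain ⟨i, hi, hq, -⟩ := exists_qSel_eq_getElem hS hγ0 hγ1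
  rw [hq]
  exact (Multiset.mem_sort _).mp (List.getElem_mem hi)

theorem mul_card_le_countP_le_qSel (hγ0 : 0 < γ) (hγ1 : γ ≤ 1) :
    γ * Multiset.card S ≤ S.countP (· ≤ qSel S γ) := by
  rcases eq_or_ne S 0 with rfl | hS
  · simp
  obtain ⟨i, hi, hq, hle, -⟩ := exists_qSel_eq_getElem hS hγ0 hγ1
  have hcount := (Multiset.pairwise_sort S (· ≤ ·)).succ_le_countP_le_getElem hi
  rw [← Multiset.countP_sort, hq]
  exact hle.trans (by exact_mod_cast hcount)

theorem one_sub_mul_card_le_countP_qSel_le (hγ0 : 0 < γ) (hγ1 : γ ≤ 1) :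
    (1 - γ) * Multiset.card S ≤ S.countP (qSel S γ ≤ ·) := by
  rcases eq_or_ne S 0 with rfl | hS
  · simp
  obtain ⟨i, hi, hq, -, hlt⟩ := exists_qSel_eq_getElem hS hγ0 hγ1
  have hcount := (Multiset.pairwise_sort S (· ≤ ·)).length_sub_le_countP_getElem_le hi
  rw [Multiset.length_sort] at hi hcount
  rw [← Multiset.countP_sort, hq]
  refine le_trans ?_ (Nat.cast_le.mpr hcount)
  rw [Nat.cast_sub hi.le]
  linarith

theorem le_qSel_one {a : ℝ} (ha : a ∈ S) : a ≤ qSel S 1 := by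
  have hcount : Multiset.card S ≤ S.countP (· ≤ qSel S 1) := by
    exact_mod_cast (one_mul (Multiset.card S : ℝ)).symm.trans_le
      (mul_card_le_countP_le_qSel one_pos le_rfl)
  exact Multiset.countP_eq_card.mp (hcount.antisymm' (Multiset.countP_le_card _ _)) a ha

end qSel

section QuantileCount

variable {ι : Type*} [Fintype ι] {γ : ℝ}

theorem mul_card_le_card_filter_le_qSel (v : ι → ℝ) (hγ0 : 0 < γ) (hγ1 : γ ≤ 1) :
    γ * Fintype.card ι ≤ #{d | v d ≤ qSel (univ.val.map v) γ} := by
  have h := mul_card_le_countP_le_qSel (S := univ.val.map v) hγ0 hγ1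
  rwa [Multiset.countP_map, Multiset.card_map, Finset.card_val, Finset.card_univ] at h

theorem one_sub_mul_card_le_card_filter_qSel_le (v : ι → ℝ) (hγ0 : 0 < γ) (hγ1 : γ ≤ 1) :
    (1 - γ) * Fintype.card ι ≤ #{d | qSel (univ.val.map v) γ ≤ v d} := by
  have h := one_sub_mul_card_le_countP_qSel_le (S := univ.val.map v) hγ0 hγ1
  rwa [Multiset.countP_map, Multiset.card_map, Finset.card_val, Finset.card_univ] at h

theorem mul_card_le_card_filter_min_le_min (a b : ι → ℝ) (hγ0 : 0 < γ) (hγ1 : γ ≤ 1) :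
    γ * Fintype.card ι ≤
      #{d | min (a d) (b d) ≤ min (qSel (univ.val.map a) γ) (qSel (univ.val.map b) γ)} := by
  rcases min_choice (qSel (univ.val.map a) γ) (qSel (univ.val.map b) γ) with h | h <;> rw [h]
  · refine (mul_card_le_card_filter_le_qSel a hγ0 hγ1).trans (Nat.cast_le.mpr ?_)
    exact card_le_card fun d hd => by simpa using min_le_of_left_le (mem_filter.mp hd).2
  · refine (mul_card_le_card_filter_le_qSel b hγ0 hγ1).trans (Nat.cast_le.mpr ?_)
    exact card_le_card fun d hd => by simpa using min_le_of_right_le (mem_filter.mp hd).2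

theorem one_sub_mul_card_le_card_filter_max_le_max (a b : ι → ℝ) (hγ0 : 0 < γ) (hγ1 : γ ≤ 1) :
    (1 - γ) * Fintype.card ι ≤
      #{d | max (qSel (univ.val.map a) γ) (qSel (univ.val.map b) γ) ≤ max (a d) (b d)} := by
  rcases max_choice (qSel (univ.val.map a) γ) (qSel (univ.val.map b) γ) with h | h <;> rw [h]
  · refine (one_sub_mul_card_le_card_filter_qSel_le a hγ0 hγ1).trans (Nat.cast_le.mpr ?_)
    exact card_le_card fun d hd => by simpa using le_max_of_le_left (mem_filter.mp hd).2
  · refine (one_sub_mul_card_le_card_filter_qSel_le b hγ0 hγ1).trans (Nat.cast_le.mpr ?_)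
    exact card_le_card fun d hd => by simpa using le_max_of_le_right (mem_filter.mp hd).2

end QuantileCount

theorem fcost_le_iff {x c : ℝ} {p : ℝ × ℝ} :
    fcost x p ≤ c ↔ x - min p.1 p.2 ≤ c ∧ max p.1 p.2 - x ≤ c := by
  simp only [fcost, ← max_sub_sub_left, ← max_sub_sub_right, max_le_iff, abs_sub_le_iff]
  tauto

theorem abs_sub_closest_le {A : Multiset ℝ} {b : ℝ} (hb : b ∈ A) (p : ℝ) :
    |p - closest A p| ≤ |p - b| := by
  have hne : A.toFinset.Nonempty := ⟨b, Multiset.mem_toFinset.mpr hb⟩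
  rw [closest, dif_pos hne]
  generalize_proofs hfilter
  exact (mem_filter.mp (min'_mem _ hfilter)).2 b (Multiset.mem_toFinset.mpr hb)

section Closest

variable {A : Multiset ℝ} {o : ℝ × ℝ}

theorem abs_sub_closest_le_fcost (ho : IsProfile A o) (p : ℝ) :
    |p - closest A p| ≤ fcost p o :=
  (abs_sub_closest_le ho.1 p).trans (le_max_left _ _)

theorem abs_sub_closest_erase_le_fcost (ho : IsProfile A o) (y p : ℝ) :
    |p - closest (A.erase y) p| ≤ fcost p o := by
  by_cases h : o.1 = y
  · rw [← h]
    exact (abs_sub_closest_le ho.2 p).trans (le_max_right _ _)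
  · exact (abs_sub_closest_le ((Multiset.mem_erase_of_ne h).mpr ho.1) p).trans (le_max_left _ _)

end Closest

def rightmost {n k : ℕ} (group : Fin n → Fin k) (x : Fin n → ℝ) (d : Fin k) : ℝ :=
  qSel (groupLocs group x d) 1

def groupCost {n k : ℕ} (group : Fin n → Fin k) (x : Fin n → ℝ) (w : ℝ × ℝ) (d : Fin k) : ℝ :=
  ⨆ i : {i : Fin n // group i = d}, fcost (x i.1) w

section Groups

variable {n k : ℕ} {group : Fin n → Fin k} {x : Fin n → ℝ} {d : Fin k} {i : Fin n}

theorem AoM_eq_sum_groupCost (w : ℝ × ℝ) :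
    AoM group x w = (1 / (k : ℝ)) * ∑ d, groupCost group x w d := rfl

theorem mem_groupLocs {y : ℝ} : y ∈ groupLocs group x d ↔ ∃ i, group i = d ∧ x i = y := by
  simp [groupLocs]

theorem le_rightmost (hi : group i = d) : x i ≤ rightmost group x d :=
  le_qSel_one (mem_groupLocs.mpr ⟨i, hi, rfl⟩)

theorem exists_eq_rightmost (hd : ∃ i, group i = d) :
    ∃ i, group i = d ∧ x i = rightmost group x d := by
  obtain ⟨i, hi⟩ := hd
  exact mem_groupLocs.mp (qSel_mem (ne_of_mem_of_not_mem' (mem_groupLocs.mpr ⟨i, hi, rfl⟩)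
    (Multiset.notMem_zero _)) one_pos le_rfl)

theorem fcost_le_groupCost (w : ℝ × ℝ) (hi : group i = d) :
    fcost (x i) w ≤ groupCost group x w d :=
  le_ciSup (f := fun j : {j // group j = d} => fcost (x j.1) w) (Set.finite_range _).bddAbove
    ⟨i, hi⟩

theorem groupCost_le {w : ℝ × ℝ} {b : ℝ} (hd : ∃ i, group i = d)
    (h : ∀ i, group i = d → fcost (x i) w ≤ b) : groupCost group x w d ≤ b := by
  obtain ⟨i, hi⟩ := hd
  have : Nonempty {j // group j = d} := ⟨⟨i, hi⟩⟩
  exact ciSup_le fun j => h j.1 j.2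

theorem fcost_rightmost_le_groupCost (w : ℝ × ℝ) (hd : ∃ i, group i = d) :
    fcost (rightmost group x d) w ≤ groupCost group x w d := by
  obtain ⟨i, hi, hxi⟩ := exists_eq_rightmost hd
  exact hxi ▸ fcost_le_groupCost w hi

end Groups

def leftOvershoot (o w : ℝ × ℝ) : ℝ := max (min o.1 o.2 - min w.1 w.2) 0

def rightOvershoot (o w : ℝ × ℝ) : ℝ := max (max w.1 w.2 - max o.1 o.2) 0

section Overshoot

variable {o w : ℝ × ℝ}

theorem fcost_le_add_max_overshoot {x g : ℝ} (hx : fcost x o ≤ g) :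
    fcost x w ≤ g + max (leftOvershoot o w) (rightOvershoot o w) := by
  rw [fcost_le_iff] at hx ⊢
  have hℓ : min o.1 o.2 - min w.1 w.2 ≤ leftOvershoot o w := le_max_left _ _
  have hρ : max w.1 w.2 - max o.1 o.2 ≤ rightOvershoot o w := le_max_left _ _
  constructor <;> linarith [le_max_left (leftOvershoot o w) (rightOvershoot o w),
    le_max_right (leftOvershoot o w) (rightOvershoot o w)]

theorem fcost_le_add_rightOvershoot {x r u g : ℝ} (hx : fcost x o ≤ g) (hxr : x ≤ r)
    (hu : r - u ≤ g) (huw : u ≤ min w.1 w.2) : fcost x w ≤ g + rightOvershoot o w := by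
  rw [fcost_le_iff] at hx ⊢
  have hρ : max w.1 w.2 - max o.1 o.2 ≤ rightOvershoot o w := le_max_left _ _
  have hρ0 : 0 ≤ rightOvershoot o w := le_max_right _ _
  constructor <;> linarith

theorem ite_leftOvershoot_add_ite_rightOvershoot_le {r c u v : ℝ} (hr : fcost r o ≤ c)
    (hu : |r - u| ≤ c) (hv : |r - v| ≤ c) :
    (if u ≤ min w.1 w.2 then leftOvershoot o w else 0) +
      (if max w.1 w.2 ≤ v then rightOvershoot o w else 0) ≤ 2 * c := by
  have hc : 0 ≤ c := (abs_nonneg _).trans hu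
  have ho : min o.1 o.2 ≤ max o.1 o.2 := min_le_max
  rw [fcost_le_iff] at hr
  rw [abs_le] at hu hv
  unfold leftOvershoot rightOvershoot
  split_ifs <;>
    rcases max_cases (min o.1 o.2 - min w.1 w.2) 0 with ⟨h1, -⟩ | ⟨h1, -⟩ <;>
    rcases max_cases (max w.1 w.2 - max o.1 o.2) 0 with ⟨h2, -⟩ | ⟨h2, -⟩ <;>
    (try simp only [h1, h2]) <;> linarith

end Overshoot

theorem card_mul_add_card_mul_le_sum {ι : Type*} [Fintype ι] [DecidableEq ι] (S R : Finset ι)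
    (a b : ℝ) (f : ι → ℝ) (h : ∀ d, (if d ∈ S then a else 0) + (if d ∈ R then b else 0) ≤ f d) :
    #S * a + #R * b ≤ ∑ d, f d := by
  have hsum := sum_le_sum fun d (_ : d ∈ univ) => h d
  rwa [sum_add_distrib, sum_ite_mem, sum_ite_mem, univ_inter, univ_inter, sum_const, sum_const,
    nsmul_eq_mul, nsmul_eq_mul] at hsum

theorem sum_le_sum_add_of_le_ite {ι : Type*} [Fintype ι] [DecidableEq ι] (S : Finset ι)
    (a b : ℝ) (f g : ι → ℝ) (h : ∀ d, f d ≤ g d + if d ∈ S then a else b) :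
    ∑ d, f d ≤ ∑ d, g d + (Fintype.card ι * b + #S * (a - b)) := by
  have hite : ∀ d, (if d ∈ S then a else b) = b + if d ∈ S then a - b else 0 := by
    intro d; split_ifs <;> ring
  have hsum := sum_le_sum fun d (_ : d ∈ univ) => h d
  rwa [sum_add_distrib, sum_congr rfl fun d _ => hite d, sum_add_distrib, sum_ite_mem,
    univ_inter, sum_const, sum_const, card_univ, nsmul_eq_mul, nsmul_eq_mul] at hsum

/-- The two terms of the constant are the vertices `ρ = 0` and `ℓ = 0` of the linear program
that maximises the left side subject to the budget. -/
theorem mul_max_add_mul_sub_max_le {β κ s t ℓ ρ T : ℝ} (hβ : β ∈ Set.Ioo 0 1) (hκ : 0 ≤ κ)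
    (hℓ : 0 ≤ ℓ) (hρ : 0 ≤ ρ) (hs : β * κ ≤ s) (ht : (1 - β) * κ ≤ t)
    (hbudget : s * ℓ + t * ρ ≤ 2 * T) :
    κ * max ℓ ρ + s * (ρ - max ℓ ρ) ≤ max (2 * (1 - β) / β) (2 / (1 - β)) * T := by
  obtain ⟨hβ0, hβ1⟩ := hβ
  set C := max (2 * (1 - β) / β) (2 / (1 - β))
  have hCβ : 2 * (1 - β) ≤ C * β := (div_le_iff₀ hβ0).mp (le_max_left _ _)
  have hC1β : 2 ≤ C * (1 - β) := (div_le_iff₀ (by linarith)).mp (le_max_right _ _)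
  have hM : ρ ≤ max ℓ ρ := le_max_right _ _
  have hMsum : max ℓ ρ ≤ ℓ + ρ := max_le (by linarith) (by linarith)
  have hC : 0 ≤ C := (div_nonneg zero_le_two (by linarith)).trans (le_max_right _ _)
  calc κ * max ℓ ρ + s * (ρ - max ℓ ρ)
      ≤ κ * max ℓ ρ + β * κ * (ρ - max ℓ ρ) := by nlinarith
    _ = κ * (β * ρ + (1 - β) * max ℓ ρ) := by ring
    _ ≤ κ * ((1 - β) * ℓ + ρ) := mul_le_mul_of_nonneg_left (by nlinarith) hκ
    _ ≤ κ * (C / 2 * (β * ℓ + (1 - β) * ρ)) := mul_le_mul_of_nonneg_left (by nlinarith) hκ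
    _ = C / 2 * (β * κ * ℓ + (1 - β) * κ * ρ) := by ring
    _ ≤ C / 2 * (s * ℓ + t * ρ) := by gcongr
    _ ≤ C * T := by nlinarith

theorem groupCost_le_add_overshoot {n k : ℕ} {group : Fin n → Fin k} {x : Fin n → ℝ}
    {d : Fin k} {o w : ℝ × ℝ} {u : ℝ} (hd : ∃ i, group i = d)
    (hu : rightmost group x d - u ≤ fcost (rightmost group x d) o) :
    groupCost group x w d ≤ groupCost group x o d + if u ≤ min w.1 w.2 then rightOvershoot o w
      else max (leftOvershoot o w) (rightOvershoot o w) := by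
  refine groupCost_le hd fun i hi => ?_
  have hx : fcost (x i) o ≤ groupCost group x o d := fcost_le_groupCost o hi
  split_ifs with huw
  · exact fcost_le_add_rightOvershoot hx (le_rightmost hi)
      (hu.trans (fcost_rightmost_le_groupCost o hd)) huw
  · exact fcost_le_add_max_overshoot hx

theorem sum_groupCost_quantile_le {β : ℝ} (hβ : β ∈ Set.Ioo 0 1) {n k : ℕ}
    {group : Fin n → Fin k} (hgrp : ∀ d, ∃ i, group i = d) (x : Fin n → ℝ) (o : ℝ × ℝ)
    (a b : Fin k → ℝ) (ha : ∀ d, |rightmost group x d - a d| ≤ fcost (rightmost group x d) o)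
    (hb : ∀ d, |rightmost group x d - b d| ≤ fcost (rightmost group x d) o) :
    ∑ d, groupCost group x (qSel (univ.val.map a) β, qSel (univ.val.map b) β) d ≤
      max (1 + 2 * (1 - β) / β) (1 + 2 / (1 - β)) * ∑ d, groupCost group x o d := by
  set w : ℝ × ℝ := (qSel (univ.val.map a) β, qSel (univ.val.map b) β)
  set r := rightmost group x
  set ℓ := leftOvershoot o w
  set ρ := rightOvershoot o w
  set S : Finset (Fin k) := {d | min (a d) (b d) ≤ min w.1 w.2}
  set R : Finset (Fin k) := {d | max w.1 w.2 ≤ max (a d) (b d)}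
  have hS : β * k ≤ #S := by
    simpa only [Fintype.card_fin] using mul_card_le_card_filter_min_le_min a b hβ.1 hβ.2.le
  have hR : (1 - β) * k ≤ #R := by
    simpa only [Fintype.card_fin] using
      one_sub_mul_card_le_card_filter_max_le_max a b hβ.1 hβ.2.le
  have hmin : ∀ d, |r d - min (a d) (b d)| ≤ fcost (r d) o := fun d => by
    rcases min_choice (a d) (b d) with h | h <;> rw [h]
    exacts [ha d, hb d]
  have hmax : ∀ d, |r d - max (a d) (b d)| ≤ fcost (r d) o := fun d => by
    rcases max_choice (a d) (b d) with h | h <;> rw [h]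
    exacts [ha d, hb d]
  have hbudget : #S * ℓ + #R * ρ ≤ ∑ d, 2 * fcost (r d) o :=
    card_mul_add_card_mul_le_sum S R ℓ ρ _ fun d => by
      simpa only [S, R, mem_filter, mem_univ, true_and] using
        ite_leftOvershoot_add_ite_rightOvershoot_le le_rfl (hmin d) (hmax d)
  have hcost : ∑ d, groupCost group x w d ≤
      ∑ d, groupCost group x o d + (k * max ℓ ρ + #S * (ρ - max ℓ ρ)) := by
    simpa only [Fintype.card_fin] using
      sum_le_sum_add_of_le_ite S ρ (max ℓ ρ) _ _ fun d => by
        simpa only [S, mem_filter, mem_univ, true_and] using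
          groupCost_le_add_overshoot (w := w) (hgrp d) ((le_abs_self _).trans (hmin d))
  have hopt : ∑ d, fcost (r d) o ≤ ∑ d, groupCost group x o d :=
    sum_le_sum fun d _ => fcost_rightmost_le_groupCost o (hgrp d)
  set C := max (2 * (1 - β) / β) (2 / (1 - β))
  have hlp : k * max ℓ ρ + #S * (ρ - max ℓ ρ) ≤ C * ∑ d, fcost (r d) o :=
    mul_max_add_mul_sub_max_le hβ k.cast_nonneg (le_max_right _ _) (le_max_right _ _) hS hR
      (hbudget.trans_eq (mul_sum _ _ _).symm)
  have hC : 0 ≤ C := (div_nonneg zero_le_two (by linarith [hβ.2])).trans (le_max_right _ _)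
  rw [max_add_add_left]
  linarith [mul_le_mul_of_nonneg_left hopt hC]

theorem quantileMech_AoM_distortion_general
    (β : ℝ) (hβ : β ∈ Set.Ioo (0 : ℝ) 1)
    (A : Multiset ℝ)
    (n k : ℕ)
    (group : Fin n → Fin k) (hgrp : ∀ d : Fin k, ∃ i : Fin n, group i = d)
    (x : Fin n → ℝ) (o : ℝ × ℝ) (ho : IsProfile A o) :
    AoM group x (quantileMech A 1 β group x) ≤
      max (1 + 2 * (1 - β) / β) (1 + 2 / (1 - β)) * AoM group x o := by
  set r := rightmost group x
  set a : Fin k → ℝ := fun d => closest A (r d)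
  set b : Fin k → ℝ := fun d =>
    if a d = qSel (univ.val.map a) β then closest (A.erase (a d)) (r d) else a d
  have hmech : quantileMech A 1 β group x = (qSel (univ.val.map a) β, qSel (univ.val.map b) β) :=
    rfl
  have ha : ∀ d, |r d - a d| ≤ fcost (r d) o := fun d => abs_sub_closest_le_fcost ho (r d)
  have hb : ∀ d, |r d - b d| ≤ fcost (r d) o := fun d => by
    dsimp only [b]
    split_ifs
    exacts [abs_sub_closest_erase_le_fcost ho _ _, ha d]
  rw [hmech, AoM_eq_sum_groupCost, AoM_eq_sum_groupCost, mul_left_comm]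
  exact mul_le_mul_of_nonneg_left (sum_groupCost_quantile_le hβ hgrp x o a b ha hb)
    (by positivity)

/-- For the Average-of-Max cost, the distortion of the (1,β)-Quantile mechanism is at
most max {1 + 2(1-β)/β, 1 + 2/(1-β)}. -/
theorem quantileMech_AoM_distortion
    (β : ℝ) (hβ : β ∈ Set.Ioo (0 : ℝ) 1)
    (A : Multiset ℝ) (hA : 2 ≤ Multiset.card A)
    (n k : ℕ) (hn : 0 < n) (hk : 0 < k)
    (group : Fin n → Fin k) (hgrp : ∀ d : Fin k, ∃ i : Fin n, group i = d)
    (x : Fin n → ℝ) (o : ℝ × ℝ) (ho : IsProfile A o) :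
    AoM group x (quantileMech A 1 β group x) ≤
      max (1 + 2 * (1 - β) / β) (1 + 2 / (1 - β)) * AoM group x o :=
  quantileMech_AoM_distortion_general β hβ A n k group hgrp x o ho

end
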